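/- Let p, q : ℝ^d → ℝ be probability density functions with respect to Lebesgue measure, with p everywhere positive, log p twice continuously differentiable, and ∇ log p Lipschitz continuous with constant L ≥ 0. Let φ : ℝ^d → ℝ^d be continuously differentiable and let ε ≥ 0 be such that T(λ) = λ + ε φ(λ) is a C¹ diffeomorphism of ℝ^d, and such that for every λ the Jacobian matrix Dφ(λ) is symmetric with ε ‖Dφ(λ)‖_op ≤ 1/2. Assume KL(μ_q ‖ μ_p) and KL(T#μ_q ‖ μ_p) are finite and the integrability conditions as above hold. Set S = ∫ (⟨∇log p(λ), φ(λ)⟩ + trace(Dφ(λ))) q(λ) dλ and R = ∫ ((L/2) ‖φ(λ)‖² + ‖Dφ(λ)‖_F²) q(λ) dλ. If S ≥ 0 and ε R ≤ S, then KL(T#μ_q ‖ μ_p) ≤ KL(μ_q ‖ μ_p); that is, one SVGD-type update does not increase the Kullback–Leibler divergence to the target density p. -/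

import Mathlib

open MeasureTheory
open scoped Classical

/-- The Kullback–Leibler divergence between two measures: `∫ log (dμ/dν) dμ`
when `μ ≪ ν` and the log-likelihood ratio is integrable, `+∞` otherwise. -/
noncomputable def klDiv {α : Type*} [MeasurableSpace α] (μ ν : Measure α) : EReal :=
  if μ ≪ ν ∧ Integrable (llr μ ν) μ then ((∫ x, llr μ ν x ∂μ : ℝ) : EReal) else ⊤

/-- The measure on `ℝ^d` with density `f` with respect to Lebesgue measure. -/
noncomputable def densityMeasure {d : ℕ} (f : EuclideanSpace ℝ (Fin d) → ℝ) :
    Measure (EuclideanSpace ℝ (Fin d)) :=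
  volume.withDensity fun x => ENNReal.ofReal (f x)

/-- The squared Frobenius norm of the Jacobian `Dφ(λ)` of `φ` at `lam`:
`∑ i j, (∂φᵢ/∂λⱼ)²`. -/
noncomputable def jacobianFrobSq {d : ℕ}
    (φ : EuclideanSpace ℝ (Fin d) → EuclideanSpace ℝ (Fin d))
    (lam : EuclideanSpace ℝ (Fin d)) : ℝ :=
  ∑ i, ∑ j, (fderiv ℝ φ lam (EuclideanSpace.single j 1) i) ^ 2

open scoped ENNReal

/-!
Write `T = id + ε • φ`. The divergence is invariant under the bijection `T`, so
`KL(T#μ_q ‖ μ_p) = KL(μ_q ‖ T⁻¹#μ_p)`, and by the change of variables formula `T⁻¹#μ_p` has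
density `det DT · p ∘ T`. Hence
`KL(T#μ_q ‖ μ_p) - KL(μ_q ‖ μ_p) = ∫ (log p - log p ∘ T - log det DT) q`.
Pointwise, the descent lemma for the `L`-smooth function `log p` bounds `log p - log p ∘ T` by
`-ε ⟪∇ log p, φ⟫ + ε² L/2 ‖φ‖²`, and since the eigenvalues `γᵢ` of the symmetric matrix `ε Dφ`
are `≥ -1/2`, `log (1 + γ) ≥ γ - γ²` gives `log det DT ≥ ε tr Dφ - ε² ‖Dφ‖_F²`. Integrating
against `q`, the difference is at most `-ε S + ε² R = ε (ε R - S) ≤ 0`.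
-/

theorem Real.sub_sq_le_log_one_add {t : ℝ} (ht : -(1 / 2) ≤ t) :
    t - t ^ 2 ≤ Real.log (1 + t) := by
  rw [Real.le_log_iff_exp_le (by linarith)]
  set u := t ^ 2 - t
  have hexp : Real.exp (t - t ^ 2) = (Real.exp u)⁻¹ := by
    rw [← Real.exp_neg]; congr 1; ring
  have hprod : 1 ≤ (1 + t) * Real.exp u := by
    rcases le_total 0 t with ht0 | ht0
    · nlinarith [Real.add_one_le_exp u, pow_nonneg ht0 3]
    · have := Real.quadratic_le_exp_of_nonneg (x := u) (by nlinarith)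
      -- `(1 + t) (1 + u + u²/2) - 1 = t² (1 + t - t² + t³) / 2`
      have : 0 ≤ t ^ 2 * (1 + t - t ^ 2 + t ^ 3) := by
        have : 0 ≤ 1 + t - t ^ 2 + t ^ 3 := by nlinarith [sq_nonneg (t + 1 / 2), sq_nonneg t]
        positivity
      nlinarith
  rwa [hexp, inv_le_iff_one_le_mul₀ (Real.exp_pos u)]

theorem add_inner_gradient_sub_sq_le {E : Type*} [NormedAddCommGroup E] [InnerProductSpace ℝ E]
    [CompleteSpace E] {f : E → ℝ} (hf : Differentiable ℝ f) {L : ℝ}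
    (hlip : ∀ x y, ‖gradient f x - gradient f y‖ ≤ L * ‖x - y‖) (x v : E) :
    f x + inner ℝ (gradient f x) v - L / 2 * ‖v‖ ^ 2 ≤ f (x + v) := by
  set h : ℝ → ℝ := fun t => f (x + t • v) - t * inner ℝ (gradient f x) v + L / 2 * t ^ 2 * ‖v‖ ^ 2
  have hderiv : ∀ t, HasDerivAt h (inner ℝ (gradient f (x + t • v) - gradient f x) v
      + L * t * ‖v‖ ^ 2) t := by
    intro t
    have hline : HasDerivAt (fun s : ℝ => x + s • v) v t := by
      simpa using ((hasDerivAt_id t).smul_const v).const_add x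
    have hf_line : HasDerivAt (fun s : ℝ => f (x + s • v))
        (inner ℝ (gradient f (x + t • v)) v) t := by
      rw [inner_gradient_left]
      exact (hf _).hasFDerivAt.comp_hasDerivAt t hline
    refine ((hf_line.sub ((hasDerivAt_id t).mul_const (inner ℝ (gradient f x) v))).add
      (((hasDerivAt_pow 2 t).const_mul (L / 2)).mul_const (‖v‖ ^ 2))).congr_deriv ?_
    simp only [inner_sub_left]; ring
  have hmono : MonotoneOn h (Set.Icc 0 1) := by
    refine monotoneOn_of_hasDerivWithinAt_nonneg (convex_Icc 0 1)
      (fun t _ => (hderiv t).continuousAt.continuousWithinAt)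
      (fun t _ => (hderiv t).hasDerivWithinAt) fun t ht => ?_
    rw [interior_Icc] at ht
    have hgrad : ‖gradient f (x + t • v) - gradient f x‖ ≤ L * t * ‖v‖ := by
      simpa [norm_smul, abs_of_pos ht.1, mul_assoc] using hlip (x + t • v) x
    have := (abs_le.mp (abs_real_inner_le_norm (gradient f (x + t • v) - gradient f x) v)).1
    nlinarith [mul_le_mul_of_nonneg_right hgrad (norm_nonneg v)]
  have := hmono ⟨le_refl 0, zero_le_one⟩ ⟨zero_le_one, le_refl 1⟩ zero_le_one
  simp only [h, zero_smul, add_zero, one_smul, zero_mul, sub_zero, one_mul, one_pow] at this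
  norm_num only at this
  linarith

namespace LinearMap.IsSymmetric

variable {E : Type*} [NormedAddCommGroup E] [InnerProductSpace ℝ E] [FiniteDimensional ℝ E]
  {n : ℕ} {A : E →ₗ[ℝ] E}

theorem det_id_add_eq_prod (hA : A.IsSymmetric) (hn : Module.finrank ℝ E = n) :
    (LinearMap.id + A).det = ∏ i, (1 + hA.eigenvalues hn i) := by
  rw [← LinearMap.det_toMatrix (hA.eigenvectorBasis hn).toBasis, map_add, LinearMap.toMatrix_id,
    hA.toMatrix_eigenvectorBasis hn, ← Matrix.diagonal_one, Matrix.diagonal_add,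
    Matrix.det_diagonal]
  rfl

theorem trace_comp_self_eq_sum_sq (hA : A.IsSymmetric) (hn : Module.finrank ℝ E = n) :
    LinearMap.trace ℝ E (A ∘ₗ A) = ∑ i, hA.eigenvalues hn i ^ 2 := by
  rw [LinearMap.trace_eq_sum_inner _ (hA.eigenvectorBasis hn)]
  refine Finset.sum_congr rfl fun i _ => ?_
  simp [hA.apply_eigenvectorBasis, inner_smul_right, sq]

theorem le_eigenvalues {c : ℝ} (hA : A.IsSymmetric) (hn : Module.finrank ℝ E = n)
    (hc : ∀ v, c * ‖v‖ ^ 2 ≤ inner ℝ (A v) v) (i : Fin n) : c ≤ hA.eigenvalues hn i := by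
  simpa [hA.apply_eigenvectorBasis, inner_smul_left] using hc (hA.eigenvectorBasis hn i)

theorem det_id_add_pos (hA : A.IsSymmetric)
    (hA_ge : ∀ v, -(1 / 2) * ‖v‖ ^ 2 ≤ inner ℝ (A v) v) : 0 < (LinearMap.id + A).det := by
  rw [hA.det_id_add_eq_prod rfl]
  exact Finset.prod_pos fun i _ => by linarith [hA.le_eigenvalues rfl hA_ge i]

theorem trace_sub_trace_comp_self_le_log_det (hA : A.IsSymmetric)
    (hA_ge : ∀ v, -(1 / 2) * ‖v‖ ^ 2 ≤ inner ℝ (A v) v) :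
    LinearMap.trace ℝ E A - LinearMap.trace ℝ E (A ∘ₗ A) ≤ Real.log (LinearMap.id + A).det := by
  have hγ := hA.le_eigenvalues rfl hA_ge
  rw [hA.det_id_add_eq_prod rfl, Real.log_prod fun i _ => by linarith [hγ i],
    hA.trace_eq_sum_eigenvalues rfl, hA.trace_comp_self_eq_sum_sq rfl, RCLike.ofReal_real_eq_id,
    id_eq, ← Finset.sum_sub_distrib]
  exact Finset.sum_le_sum fun i _ => Real.sub_sq_le_log_one_add (hγ i)

theorem trace_comp_self_eq_sum_sq_apply_single {ι : Type*} [Fintype ι] [DecidableEq ι]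
    {A : EuclideanSpace ℝ ι →ₗ[ℝ] EuclideanSpace ℝ ι} (hA : A.IsSymmetric) :
    LinearMap.trace ℝ _ (A ∘ₗ A) = ∑ i, ∑ j, (A (EuclideanSpace.single j 1) i) ^ 2 := by
  rw [LinearMap.trace_eq_sum_inner _ (EuclideanSpace.basisFun ι ℝ), Finset.sum_comm]
  refine Finset.sum_congr rfl fun j _ => ?_
  rw [LinearMap.comp_apply, ← hA, EuclideanSpace.basisFun_apply, PiLp.inner_apply]
  simp [sq]

end LinearMap.IsSymmetric

section OneStep

variable {E : Type*} [NormedAddCommGroup E] [InnerProductSpace ℝ E] {D : E →L[ℝ] E} {ε : ℝ}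

theorem neg_half_mul_sq_le_inner_smul_apply (hε : 0 ≤ ε) (hop : ε * ‖D‖ ≤ 1 / 2) (v : E) :
    -(1 / 2) * ‖v‖ ^ 2 ≤ inner ℝ ((ε • D) v) v := by
  have h := (abs_le.mp (abs_real_inner_le_norm ((ε • D) v) v)).1
  have hB : ‖(ε • D) v‖ ≤ 1 / 2 * ‖v‖ := by
    refine ((ε • D).le_opNorm v).trans (mul_le_mul_of_nonneg_right ?_ (norm_nonneg v))
    rwa [norm_smul, Real.norm_of_nonneg hε]
  nlinarith [mul_le_mul_of_nonneg_right hB (norm_nonneg v)]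

theorem det_id_add_smul_pos [FiniteDimensional ℝ E] (hD : (D : E →ₗ[ℝ] E).IsSymmetric)
    (hε : 0 ≤ ε) (hop : ε * ‖D‖ ≤ 1 / 2) :
    0 < (ContinuousLinearMap.id ℝ E + ε • D).det :=
  (hD.smul (by simp)).det_id_add_pos (neg_half_mul_sq_le_inner_smul_apply hε hop)

variable {d : ℕ} {φ : EuclideanSpace ℝ (Fin d) → EuclideanSpace ℝ (Fin d)}
  {x : EuclideanSpace ℝ (Fin d)}

theorem smul_trace_sub_sq_mul_jacobianFrobSq_le_log_det
    (hφ : (fderiv ℝ φ x : EuclideanSpace ℝ (Fin d) →ₗ[ℝ] _).IsSymmetric) (hε : 0 ≤ ε)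
    (hop : ε * ‖fderiv ℝ φ x‖ ≤ 1 / 2) :
    ε * LinearMap.trace ℝ _ (fderiv ℝ φ x : EuclideanSpace ℝ (Fin d) →ₗ[ℝ] _)
        - ε ^ 2 * jacobianFrobSq φ x
      ≤ Real.log (ContinuousLinearMap.id ℝ _ + ε • fderiv ℝ φ x).det := by
  have h := (hφ.smul (by simp)).trace_sub_trace_comp_self_le_log_det
    (neg_half_mul_sq_le_inner_smul_apply hε hop)
  rw [LinearMap.smul_comp, LinearMap.comp_smul, smul_smul, map_smul, map_smul,
    hφ.trace_comp_self_eq_sum_sq_apply_single, smul_eq_mul, smul_eq_mul, ← sq] at h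
  rw [ContinuousLinearMap.det, ContinuousLinearMap.toLinearMap_add, ContinuousLinearMap.coe_id,
    ContinuousLinearMap.toLinearMap_smul, jacobianFrobSq]
  simpa only [ContinuousLinearMap.coe_coe] using h

theorem sub_apply_add_smul_sub_log_det_le {f : EuclideanSpace ℝ (Fin d) → ℝ}
    (hf : Differentiable ℝ f) {L : ℝ}
    (hlip : ∀ x y, ‖gradient f x - gradient f y‖ ≤ L * ‖x - y‖)
    (hφ : (fderiv ℝ φ x : EuclideanSpace ℝ (Fin d) →ₗ[ℝ] _).IsSymmetric) (hε : 0 ≤ ε)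
    (hop : ε * ‖fderiv ℝ φ x‖ ≤ 1 / 2) :
    f x - f (x + ε • φ x) - Real.log (ContinuousLinearMap.id ℝ _ + ε • fderiv ℝ φ x).det
      ≤ -ε * (inner ℝ (gradient f x) (φ x)
            + LinearMap.trace ℝ _ (fderiv ℝ φ x : EuclideanSpace ℝ (Fin d) →ₗ[ℝ] _))
        + ε ^ 2 * (L / 2 * ‖φ x‖ ^ 2 + jacobianFrobSq φ x) := by
  have hdescent := add_inner_gradient_sub_sq_le hf hlip x (ε • φ x)
  rw [inner_smul_right, norm_smul, Real.norm_of_nonneg hε, mul_pow] at hdescent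
  linarith [smul_trace_sub_sq_mul_jacobianFrobSq_le_log_det hφ hε hop]

end OneStep

section WithDensityOfReal

variable {α : Type*} [MeasurableSpace α] (μ : Measure α) {f g : α → ℝ}

theorem integrable_withDensity_ofReal_iff (hf : Measurable f) (hf_nonneg : ∀ x, 0 ≤ f x)
    {G : α → ℝ} :
    Integrable G (μ.withDensity fun x => ENNReal.ofReal (f x)) ↔
      Integrable (fun x => G x * f x) μ := by
  rw [integrable_withDensity_iff_integrable_smul' hf.ennreal_ofReal
    (ae_of_all _ fun _ => ENNReal.ofReal_lt_top)]
  simp only [ENNReal.toReal_ofReal (hf_nonneg _), smul_eq_mul, mul_comm]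

theorem integral_withDensity_ofReal (hf : Measurable f) (hf_nonneg : ∀ x, 0 ≤ f x)
    (G : α → ℝ) :
    ∫ x, G x ∂μ.withDensity (fun x => ENNReal.ofReal (f x)) = ∫ x, G x * f x ∂μ := by
  rw [integral_withDensity_eq_integral_toReal_smul hf.ennreal_ofReal
    (ae_of_all _ fun _ => ENNReal.ofReal_lt_top)]
  simp only [ENNReal.toReal_ofReal (hf_nonneg _), smul_eq_mul, mul_comm]

variable [SigmaFinite μ]

theorem llr_withDensity_ofReal_ae_eq (hf : Measurable f) (hg : Measurable g)
    (hg_pos : ∀ x, 0 < g x) :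
    llr (μ.withDensity fun x => ENNReal.ofReal (f x)) (μ.withDensity fun x => ENNReal.ofReal (g x))
      =ᵐ[μ.withDensity fun x => ENNReal.ofReal (f x)] fun x => Real.log (f x) - Real.log (g x) := by
  have hrn_right := Measure.rnDeriv_withDensity_right (μ.withDensity fun x => ENNReal.ofReal (f x))
    μ hg.ennreal_ofReal.aemeasurable
    (ae_of_all _ fun x => (ENNReal.ofReal_pos.mpr (hg_pos x)).ne')
    (ae_of_all _ fun _ => ENNReal.ofReal_ne_top)
  have hrn := Measure.rnDeriv_withDensity μ hf.ennreal_ofReal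
  have hf_pos : ∀ᵐ x ∂μ.withDensity fun x => ENNReal.ofReal (f x), 0 < f x :=
    (ae_withDensity_iff hf.ennreal_ofReal).mpr
      (ae_of_all _ fun x hx => ENNReal.ofReal_pos.mp (pos_iff_ne_zero.mpr hx))
  have hac := withDensity_absolutelyContinuous μ fun x => ENNReal.ofReal (f x)
  filter_upwards [hac.ae_le hrn_right, hac.ae_le hrn, hf_pos] with x hx_right hx hx_pos
  rw [llr_def]
  dsimp only
  rw [hx_right, hx, ENNReal.toReal_mul, ENNReal.toReal_inv,
    ENNReal.toReal_ofReal (hg_pos x).le, ENNReal.toReal_ofReal hx_pos.le,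
    Real.log_mul (inv_ne_zero (hg_pos x).ne') hx_pos.ne', Real.log_inv]
  ring

theorem klDiv_withDensity_ofReal_of_ne_top (hf : Measurable f) (hg : Measurable g)
    (hg_pos : ∀ x, 0 < g x)
    (h : klDiv (μ.withDensity fun x => ENNReal.ofReal (f x))
      (μ.withDensity fun x => ENNReal.ofReal (g x)) ≠ ⊤) :
    Integrable (fun x => Real.log (f x) - Real.log (g x))
        (μ.withDensity fun x => ENNReal.ofReal (f x)) ∧
      klDiv (μ.withDensity fun x => ENNReal.ofReal (f x))
        (μ.withDensity fun x => ENNReal.ofReal (g x)) =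
        ((∫ x, Real.log (f x) - Real.log (g x) ∂μ.withDensity fun x => ENNReal.ofReal (f x) : ℝ)
          : EReal) := by
  have hllr := llr_withDensity_ofReal_ae_eq μ hf hg hg_pos
  rw [klDiv] at h ⊢
  split_ifs at h ⊢ with hc
  · exact ⟨hc.2.congr hllr, by rw [integral_congr_ae hllr]⟩
  · exact absurd rfl h

end WithDensityOfReal

theorem MeasurableEquiv.withDensity_map {α β : Type*} [MeasurableSpace α] [MeasurableSpace β]
    (e : α ≃ᵐ β) (μ : Measure α) (g : β → ℝ≥0∞) :
    (μ.map e).withDensity g = (μ.withDensity (g ∘ e)).map e := by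
  ext s hs
  rw [withDensity_apply _ hs, e.map_apply, withDensity_apply _ (e.measurable hs), e.restrict_map,
    lintegral_map_equiv]
  rfl

theorem klDiv_map_measurableEquiv {α β : Type*} [MeasurableSpace α] [MeasurableSpace β]
    (e : α ≃ᵐ β) (μ ν : Measure α) [SigmaFinite μ] [SigmaFinite ν] :
    klDiv (μ.map e) (ν.map e) = klDiv μ ν := by
  have hac : μ.map e ≪ ν.map e ↔ μ ≪ ν :=
    ⟨fun h => by simpa using h.map e.symm.measurable, fun h => h.map e.measurable⟩
  by_cases h : μ ≪ ν
  · have hllr : (fun x => llr (μ.map e) (ν.map e) (e x)) =ᵐ[μ] llr μ ν := by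
      filter_upwards [h.ae_le (e.measurableEmbedding.rnDeriv_map μ ν)] with x hx
      simp only [llr_def, hx]
    simp only [klDiv, hac, h, true_and, e.measurableEmbedding.integrable_map_iff,
      e.measurableEmbedding.integral_map, Function.comp_def]
    rw [integrable_congr hllr, integral_congr_ae hllr]
  · simp [klDiv, hac, h]

section ChangeOfVariables

variable {E : Type*} [NormedAddCommGroup E] [NormedSpace ℝ E] [FiniteDimensional ℝ E]
  [MeasurableSpace E] [BorelSpace E]

theorem measurable_abs_det_fderiv (f : E → E) : Measurable fun x => |(fderiv ℝ f x).det| :=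
  (ContinuousLinearMap.continuous_det.measurable.comp (measurable_fderiv ℝ f)).abs

variable (μ : Measure E) [μ.IsAddHaarMeasure] {e : E ≃ᵐ E}

theorem MeasurableEquiv.map_symm_withDensity (he : Differentiable ℝ e) {g : E → ℝ≥0∞}
    (hg : Measurable g) :
    (μ.withDensity g).map e.symm =
      μ.withDensity fun x => ENNReal.ofReal |(fderiv ℝ e x).det| * g (e x) := by
  have hchange : (μ.withDensity fun x => ENNReal.ofReal |(fderiv ℝ e x).det|).map e = μ := by
    simpa [e.surjective.range_eq] using map_withDensity_abs_det_fderiv_eq_addHaar μ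
      MeasurableSet.univ.nullMeasurableSet (fun x _ => (he x).hasFDerivAt.hasFDerivWithinAt)
      e.injective.injOn
  conv_lhs => rw [← hchange]
  rw [e.withDensity_map, e.map_symm_map,
    ← withDensity_mul _ (measurable_abs_det_fderiv e).ennreal_ofReal (hg.comp e.measurable)]
  rfl

theorem klDiv_map_withDensity_ofReal (he : Differentiable ℝ e) (f : E → ℝ) {g : E → ℝ}
    (hg : Measurable g) :
    klDiv ((μ.withDensity fun x => ENNReal.ofReal (f x)).map e)
        (μ.withDensity fun x => ENNReal.ofReal (g x)) =
      klDiv (μ.withDensity fun x => ENNReal.ofReal (f x))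
        (μ.withDensity fun x => ENNReal.ofReal (|(fderiv ℝ e x).det| * g (e x))) := by
  have := e.symm.sigmaFinite_map (μ := μ.withDensity fun x => ENNReal.ofReal (g x))
  conv_lhs => rw [← e.map_map_symm (ν := μ.withDensity fun x => ENNReal.ofReal (g x))]
  rw [klDiv_map_measurableEquiv, MeasurableEquiv.map_symm_withDensity μ he hg.ennreal_ofReal]
  simp_rw [ENNReal.ofReal_mul (abs_nonneg _)]

theorem klDiv_map_le_klDiv_of_integral_nonpos (he : Differentiable ℝ e)
    (hdet : ∀ x, (fderiv ℝ e x).det ≠ 0) {f g B : E → ℝ} (hf : Measurable f) (hg : Measurable g)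
    (hg_pos : ∀ x, 0 < g x)
    (hfin : klDiv (μ.withDensity fun x => ENNReal.ofReal (f x))
      (μ.withDensity fun x => ENNReal.ofReal (g x)) ≠ ⊤)
    (hfin_map : klDiv ((μ.withDensity fun x => ENNReal.ofReal (f x)).map e)
      (μ.withDensity fun x => ENNReal.ofReal (g x)) ≠ ⊤)
    (hB : Integrable B (μ.withDensity fun x => ENNReal.ofReal (f x)))
    (hB_le : ∀ x, Real.log (g x) - Real.log (g (e x)) - Real.log |(fderiv ℝ e x).det| ≤ B x)
    (hB_nonpos : ∫ x, B x ∂μ.withDensity (fun x => ENNReal.ofReal (f x)) ≤ 0) :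
    klDiv ((μ.withDensity fun x => ENNReal.ofReal (f x)).map e)
        (μ.withDensity fun x => ENNReal.ofReal (g x))
      ≤ klDiv (μ.withDensity fun x => ENNReal.ofReal (f x))
        (μ.withDensity fun x => ENNReal.ofReal (g x)) := by
  rw [klDiv_map_withDensity_ofReal μ he f hg] at hfin_map ⊢
  obtain ⟨hI_map, hK_map⟩ := klDiv_withDensity_ofReal_of_ne_top μ hf
    (g := fun x => |(fderiv ℝ e x).det| * g (e x))
    ((measurable_abs_det_fderiv e).mul (hg.comp e.measurable))
    (fun x => mul_pos (abs_pos.mpr (hdet x)) (hg_pos _)) hfin_map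
  obtain ⟨hI, hK⟩ := klDiv_withDensity_ofReal_of_ne_top μ hf hg hg_pos hfin
  rw [hK_map, hK, EReal.coe_le_coe_iff, ← sub_nonpos, ← integral_sub hI_map hI]
  refine (integral_mono (hI_map.sub hI) hB fun x => ?_).trans hB_nonpos
  rw [Pi.sub_apply, Real.log_mul (abs_pos.mpr (hdet x)).ne' (hg_pos _).ne']
  linarith [hB_le x]

end ChangeOfVariables


theorem klDiv_pushforward_le_klDiv_general {d : ℕ}
    (q p : EuclideanSpace ℝ (Fin d) → ℝ)
    (hq_meas : Measurable q) (hq_nonneg : ∀ x, 0 ≤ q x)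
    (hp_meas : Measurable p) (hp_pos : ∀ x, 0 < p x)
    (hlogp : ContDiff ℝ 2 (fun x => Real.log (p x)))
    (L : ℝ)
    (hlip : ∀ x y : EuclideanSpace ℝ (Fin d),
      ‖gradient (fun z => Real.log (p z)) x
        - gradient (fun z => Real.log (p z)) y‖ ≤ L * ‖x - y‖)
    (φ : EuclideanSpace ℝ (Fin d) → EuclideanSpace ℝ (Fin d))
    (hφ : ContDiff ℝ 1 φ) (ε : ℝ) (hε : 0 ≤ ε)
    (Sinv : EuclideanSpace ℝ (Fin d) → EuclideanSpace ℝ (Fin d))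
    (hSinv : ContDiff ℝ 1 Sinv)
    (hST : Function.LeftInverse Sinv (fun lam => lam + ε • φ lam))
    (hTS : Function.RightInverse Sinv (fun lam => lam + ε • φ lam))
    (hsymm : ∀ lam, LinearMap.IsSymmetric
      ((fderiv ℝ φ lam : EuclideanSpace ℝ (Fin d) →L[ℝ]
        EuclideanSpace ℝ (Fin d)).toLinearMap))
    (hop : ∀ lam : EuclideanSpace ℝ (Fin d), ε * ‖fderiv ℝ φ lam‖ ≤ 1 / 2)
    (hfin₁ : klDiv (densityMeasure q) (densityMeasure p) ≠ ⊤)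
    (hfin₂ : klDiv ((densityMeasure q).map (fun lam => lam + ε • φ lam))
      (densityMeasure p) ≠ ⊤)
    (hint₁ : Integrable (fun lam =>
      ((inner ℝ (gradient (fun z => Real.log (p z)) lam) (φ lam) : ℝ)
        + LinearMap.trace ℝ (EuclideanSpace ℝ (Fin d))
            (fderiv ℝ φ lam).toLinearMap) * q lam))
    (hint₂ : Integrable (fun lam =>
      (L / 2 * ‖φ lam‖ ^ 2 + jacobianFrobSq φ lam) * q lam))
    (S R : ℝ)
    (hSdef : S = ∫ lam,
      ((inner ℝ (gradient (fun z => Real.log (p z)) lam) (φ lam) : ℝ)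
        + LinearMap.trace ℝ (EuclideanSpace ℝ (Fin d))
            (fderiv ℝ φ lam).toLinearMap) * q lam)
    (hRdef : R = ∫ lam,
      (L / 2 * ‖φ lam‖ ^ 2 + jacobianFrobSq φ lam) * q lam)
    (hεR : ε * R ≤ S) :
    klDiv ((densityMeasure q).map (fun lam => lam + ε • φ lam))
        (densityMeasure p)
      ≤ klDiv (densityMeasure q) (densityMeasure p) := by
  have hφ_diff : Differentiable ℝ φ := hφ.differentiable one_ne_zero
  let e : EuclideanSpace ℝ (Fin d) ≃ᵐ EuclideanSpace ℝ (Fin d) :=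
    (Homeomorph.mk ⟨fun lam => lam + ε • φ lam, Sinv, hST, hTS⟩ (by fun_prop)
      hSinv.continuous).toMeasurableEquiv
  have he_deriv : ∀ x, HasFDerivAt e (ContinuousLinearMap.id ℝ _ + ε • fderiv ℝ φ x) x :=
    fun x => (hasFDerivAt_id x).add ((hφ_diff x).hasFDerivAt.const_smul ε)
  have hdet_pos : ∀ x, 0 < (fderiv ℝ e x).det := fun x => by
    rw [(he_deriv x).fderiv]; exact det_id_add_smul_pos (hsymm x) hε (hop x)
  have hG₁ := (integrable_withDensity_ofReal_iff volume hq_meas hq_nonneg).mpr hint₁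
  have hG₂ := (integrable_withDensity_ofReal_iff volume hq_meas hq_nonneg).mpr hint₂
  refine klDiv_map_le_klDiv_of_integral_nonpos volume (e := e)
    (fun x => (he_deriv x).differentiableAt) (fun x => (hdet_pos x).ne') hq_meas hp_meas hp_pos
    hfin₁ hfin₂ ((hG₁.const_mul (-ε)).add (hG₂.const_mul (ε ^ 2))) (fun x => ?_) ?_
  · have := sub_apply_add_smul_sub_log_det_le (hlogp.differentiable two_ne_zero) hlip
      (hsymm x) hε (hop x)
    rw [Real.log_abs, Pi.add_apply, (he_deriv x).fderiv]
    exact this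
  · calc _ = ε * (ε * R - S) := by
          rw [integral_add' (hG₁.const_mul _) (hG₂.const_mul _), integral_const_mul,
            integral_const_mul, integral_withDensity_ofReal volume hq_meas hq_nonneg,
            integral_withDensity_ofReal volume hq_meas hq_nonneg, ← hSdef, ← hRdef]
          ring
      _ ≤ 0 := mul_nonpos_of_nonneg_of_nonpos hε (sub_nonpos.mpr hεR)

/-- monotone decrease: under the setup of Statement 1, set
`S = ∫ (⟪∇ log p, φ⟫ + tr Dφ) q` and `R = ∫ ((L/2)‖φ‖² + ‖Dφ‖_F²) q`. If
`S ≥ 0` and `ε R ≤ S`, then one SVGD-type update does not increase the KL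
divergence to the target: `KL(T#μ_q ‖ μ_p) ≤ KL(μ_q ‖ μ_p)`. -/
theorem klDiv_pushforward_le_klDiv {d : ℕ}
    (q p : EuclideanSpace ℝ (Fin d) → ℝ)
    (hq_meas : Measurable q) (hq_nonneg : ∀ x, 0 ≤ q x)
    (hq_int : ∫ x, q x = 1)
    (hp_meas : Measurable p) (hp_pos : ∀ x, 0 < p x)
    (hp_int : ∫ x, p x = 1)
    (hlogp : ContDiff ℝ 2 (fun x => Real.log (p x)))
    (L : ℝ) (hL : 0 ≤ L)
    (hlip : ∀ x y : EuclideanSpace ℝ (Fin d),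
      ‖gradient (fun z => Real.log (p z)) x
        - gradient (fun z => Real.log (p z)) y‖ ≤ L * ‖x - y‖)
    (φ : EuclideanSpace ℝ (Fin d) → EuclideanSpace ℝ (Fin d))
    (hφ : ContDiff ℝ 1 φ) (ε : ℝ) (hε : 0 ≤ ε)
    (Sinv : EuclideanSpace ℝ (Fin d) → EuclideanSpace ℝ (Fin d))
    (hSinv : ContDiff ℝ 1 Sinv)
    (hST : Function.LeftInverse Sinv (fun lam => lam + ε • φ lam))
    (hTS : Function.RightInverse Sinv (fun lam => lam + ε • φ lam))
    (hsymm : ∀ lam, LinearMap.IsSymmetric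
      ((fderiv ℝ φ lam : EuclideanSpace ℝ (Fin d) →L[ℝ]
        EuclideanSpace ℝ (Fin d)).toLinearMap))
    (hop : ∀ lam : EuclideanSpace ℝ (Fin d), ε * ‖fderiv ℝ φ lam‖ ≤ 1 / 2)
    (hfin₁ : klDiv (densityMeasure q) (densityMeasure p) ≠ ⊤)
    (hfin₂ : klDiv ((densityMeasure q).map (fun lam => lam + ε • φ lam))
      (densityMeasure p) ≠ ⊤)
    (hint₁ : Integrable (fun lam =>
      ((inner ℝ (gradient (fun z => Real.log (p z)) lam) (φ lam) : ℝ)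
        + LinearMap.trace ℝ (EuclideanSpace ℝ (Fin d))
            (fderiv ℝ φ lam).toLinearMap) * q lam))
    (hint₂ : Integrable (fun lam =>
      (L / 2 * ‖φ lam‖ ^ 2 + jacobianFrobSq φ lam) * q lam))
    (S R : ℝ)
    (hSdef : S = ∫ lam,
      ((inner ℝ (gradient (fun z => Real.log (p z)) lam) (φ lam) : ℝ)
        + LinearMap.trace ℝ (EuclideanSpace ℝ (Fin d))
            (fderiv ℝ φ lam).toLinearMap) * q lam)
    (hRdef : R = ∫ lam,
      (L / 2 * ‖φ lam‖ ^ 2 + jacobianFrobSq φ lam) * q lam)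
    (hS_nonneg : 0 ≤ S) (hεR : ε * R ≤ S) :
    klDiv ((densityMeasure q).map (fun lam => lam + ε • φ lam))
        (densityMeasure p)
      ≤ klDiv (densityMeasure q) (densityMeasure p) :=
  klDiv_pushforward_le_klDiv_general q p hq_meas hq_nonneg hp_meas hp_pos hlogp L hlip φ hφ ε hε
    Sinv hSinv hST hTS hsymm hop hfin₁ hfin₂ hint₁ hint₂ S R hSdef hRdef hεR
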